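/- arXiv:1603.08428 — 3 statements merged into one kernel-verified Lean document; each statement's English description precedes it below -/
import Mathlib

section
/- Let D and Ω be bounded open domains in ℝ^m (m ≥ 2) whose boundaries have Lebesgue measure zero, and suppose φ : closure(Ω) → ℝ^m is continuous on closure(Ω), continuously differentiable on Ω, and maps Ω diffeomorphically onto D. If f : closure(D) → ℝ is continuous and f ≥ 0, then ∫_Ω f(φ(x)) · |det Dφ(x)| dx ≤ ∫_D f(y) dy. -/
open MeasureTheory Set

theorem setIntegral_comp_mul_abs_det_fderiv_eq {E : Type*} [NormedAddCommGroup E]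
    [NormedSpace ℝ E] [FiniteDimensional ℝ E] [MeasurableSpace E] [BorelSpace E]
    (μ : Measure E) [μ.IsAddHaarMeasure] {s : Set E} (hs : IsOpen s) {φ : E → E}
    (hφ : DifferentiableOn ℝ φ s) (hinj : InjOn φ s) (f : E → ℝ) :
    ∫ x in s, f (φ x) * |(fderiv ℝ φ x).det| ∂μ = ∫ y in φ '' s, f y ∂μ := by
  have hderiv : ∀ x ∈ s, HasFDerivWithinAt φ (fderiv ℝ φ x) s x := fun x hx =>
    ((hφ x hx).differentiableAt (hs.mem_nhds hx)).hasFDerivAt.hasFDerivWithinAt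
  rw [integral_image_eq_integral_abs_det_fderiv_smul μ hs.measurableSet hderiv hinj]
  simp only [smul_eq_mul, mul_comm]

theorem change_of_variables_le_general
    (m : ℕ)
    (D Ω : Set (EuclideanSpace ℝ (Fin m)))
    (hΩopen : IsOpen Ω)
    (φ ψ : EuclideanSpace ℝ (Fin m) → EuclideanSpace ℝ (Fin m))
    (hφC1 : ContDiffOn ℝ 1 φ Ω)
    (hφim : φ '' Ω = D)
    (hψφ : ∀ x ∈ Ω, ψ (φ x) = x)
    (f : EuclideanSpace ℝ (Fin m) → ℝ) :
    ∫ x in Ω, f (φ x) * |(fderiv ℝ φ x).det| ≤ ∫ y in D, f y := by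
  subst hφim
  exact (setIntegral_comp_mul_abs_det_fderiv_eq volume hΩopen
    (hφC1.differentiableOn one_ne_zero) (LeftInvOn.injOn hψφ) f).le

/-- Inequality (e10) of the paper: under the hypotheses of the change of variables
theorem with `m ≥ 2` and `f` continuous and nonnegative on `closure D`, one has
`∫_Ω (f ∘ φ) |det Dφ| ≤ ∫_D f`. -/
theorem change_of_variables_le
    (m : ℕ) (hm : 2 ≤ m)
    (D Ω : Set (EuclideanSpace ℝ (Fin m)))
    (hDopen : IsOpen D) (hDbdd : Bornology.IsBounded D)
    (hΩopen : IsOpen Ω) (hΩbdd : Bornology.IsBounded Ω)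
    (hDfr : volume (frontier D) = 0) (hΩfr : volume (frontier Ω) = 0)
    (φ ψ : EuclideanSpace ℝ (Fin m) → EuclideanSpace ℝ (Fin m))
    (hφcont : ContinuousOn φ (closure Ω))
    (hφC1 : ContDiffOn ℝ 1 φ Ω)
    (hφim : φ '' Ω = D)
    (hψC1 : ContDiffOn ℝ 1 ψ D)
    (hψφ : ∀ x ∈ Ω, ψ (φ x) = x)
    (hφψ : ∀ y ∈ D, φ (ψ y) = y)
    (f : EuclideanSpace ℝ (Fin m) → ℝ)
    (hf : ContinuousOn f (closure D))
    (hf0 : ∀ y ∈ closure D, 0 ≤ f y) :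
    ∫ x in Ω, f (φ x) * |(fderiv ℝ φ x).det| ≤ ∫ y in D, f y :=
  change_of_variables_le_general m D Ω hΩopen φ ψ hφC1 hφim hψφ f
end

section
/- Let m ≥ 2. Let U ⊂ ℝ^{m−1} be a Jordan measurable bounded closed set and let x : U → ℝ^m be a C¹-parametrized surface with normal vector N(u). Let Ũ ⊂ ℝ^{m−1} be a Jordan measurable bounded closed set and let ψ : Ũ → U be a C¹-diffeomorphism; set x̃ = x ∘ ψ, with normal vector Ñ(v) defined in the same way from the Jacobian of x̃. Then for every continuous function f : x(U) → ℝ, ∫_U f(x(u)) |N(u)| du = ∫_{Ũ} f(x̃(v)) |Ñ(v)| dv, where |·| is the Euclidean norm on ℝ^m. -/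
/-!
Substituting `u = ψ v` turns the left-hand side into `∫_{U₂} f(x(ψ v)) |N(ψ v)| |det Dψ(v)| dv`.
At an interior point `v` of `U₂` the chain rule gives `J_{x∘ψ}(v) = J_x(ψ v) · Dψ(v)`, so every
maximal minor, hence the normal vector, is multiplied by `det Dψ(v)`: `Ñ(v) = det Dψ(v) · N(ψ v)`.
Since `U₂` is Jordan measurable, its frontier is null and interior points suffice.
-/

open MeasureTheory Set

namespace Matrix
variable {R : Type*} [CommRing R] {n : ℕ}

def normal (A : Matrix (Fin (n + 1)) (Fin n) R) (i : Fin (n + 1)) : R :=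
  (-1) ^ (i : ℕ) * (A.submatrix i.succAbove id).det

theorem normal_mul (A : Matrix (Fin (n + 1)) (Fin n) R) (B : Matrix (Fin n) (Fin n) R) :
    normal (A * B) = B.det • normal A := by
  ext i
  have hminor : (A * B).submatrix i.succAbove id = A.submatrix i.succAbove id * B := rfl
  simp only [normal, Pi.smul_apply, smul_eq_mul, hminor, det_mul]
  ring

end Matrix

namespace ContinuousLinearMap
variable {m n : ℕ}

noncomputable def stdMatrix (L : EuclideanSpace ℝ (Fin n) →L[ℝ] EuclideanSpace ℝ (Fin m)) :
    Matrix (Fin m) (Fin n) ℝ :=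
  Matrix.of fun i j => L (EuclideanSpace.single j 1) i

theorem stdMatrix_eq_toMatrix (L : EuclideanSpace ℝ (Fin n) →L[ℝ] EuclideanSpace ℝ (Fin m)) :
    L.stdMatrix = LinearMap.toMatrix (EuclideanSpace.basisFun (Fin n) ℝ).toBasis
      (EuclideanSpace.basisFun (Fin m) ℝ).toBasis L := by
  ext i j
  simp [stdMatrix, LinearMap.toMatrix_apply]

theorem stdMatrix_comp {k : ℕ} (L : EuclideanSpace ℝ (Fin n) →L[ℝ] EuclideanSpace ℝ (Fin m))
    (D : EuclideanSpace ℝ (Fin k) →L[ℝ] EuclideanSpace ℝ (Fin n)) :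
    (L.comp D).stdMatrix = L.stdMatrix * D.stdMatrix := by
  simp only [stdMatrix_eq_toMatrix, toLinearMap_comp]
  exact LinearMap.toMatrix_comp _ _ _ _ _

theorem det_stdMatrix (D : EuclideanSpace ℝ (Fin n) →L[ℝ] EuclideanSpace ℝ (Fin n)) :
    D.stdMatrix.det = D.det := by
  rw [stdMatrix_eq_toMatrix, LinearMap.det_toMatrix, det]

theorem normal_stdMatrix_comp (L : EuclideanSpace ℝ (Fin n) →L[ℝ] EuclideanSpace ℝ (Fin (n + 1)))
    (D : EuclideanSpace ℝ (Fin n) →L[ℝ] EuclideanSpace ℝ (Fin n)) :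
    (L.comp D).stdMatrix.normal = D.det • L.stdMatrix.normal := by
  rw [stdMatrix_comp, Matrix.normal_mul, det_stdMatrix]

end ContinuousLinearMap

/-- The index `i : Fin (n + 1)` stands for the paper's `i + 1`, so the paper's sign
`(-1)^(i+1)` is `(-1)^i` here. -/
theorem surface_integral_well_defined_general
    (n : ℕ)
    -- the parametrized surface x : U → ℝ^{n+1}
    (U : Set (EuclideanSpace ℝ (Fin n)))
    (x : EuclideanSpace ℝ (Fin n) → EuclideanSpace ℝ (Fin (n + 1)))
    (x' : EuclideanSpace ℝ (Fin n) →
      (EuclideanSpace ℝ (Fin n) →L[ℝ] EuclideanSpace ℝ (Fin (n + 1))))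
    (hx : ∀ u ∈ U, HasFDerivWithinAt x (x' u) U u)
    (N : EuclideanSpace ℝ (Fin n) → EuclideanSpace ℝ (Fin (n + 1)))
    (hN : ∀ u, ∀ i, N u i = (-1 : ℝ) ^ (i : ℕ) * (Matrix.of fun (j k : Fin n) =>
      x' u (EuclideanSpace.single k 1) (i.succAbove j)).det)
    -- the reparametrization ψ : U₂ → U, a C¹-diffeomorphism
    (U₂ : Set (EuclideanSpace ℝ (Fin n)))
    (hU₂closed : IsClosed U₂)
    (hU₂jordan : volume (frontier U₂) = 0)
    (ψ ψinv : EuclideanSpace ℝ (Fin n) → EuclideanSpace ℝ (Fin n))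
    (hψC1 : ContDiffOn ℝ 1 ψ U₂)
    (hψim : ψ '' U₂ = U)
    (hψinvψ : ∀ v ∈ U₂, ψinv (ψ v) = v)
    -- the reparametrized surface x ∘ ψ and its normal vector
    (xψ' : EuclideanSpace ℝ (Fin n) →
      (EuclideanSpace ℝ (Fin n) →L[ℝ] EuclideanSpace ℝ (Fin (n + 1))))
    (hxψ : ∀ v ∈ U₂, HasFDerivWithinAt (x ∘ ψ) (xψ' v) U₂ v)
    (N₂ : EuclideanSpace ℝ (Fin n) → EuclideanSpace ℝ (Fin (n + 1)))
    (hN₂ : ∀ v, ∀ i, N₂ v i = (-1 : ℝ) ^ (i : ℕ) * (Matrix.of fun (j k : Fin n) =>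
      xψ' v (EuclideanSpace.single k 1) (i.succAbove j)).det)
    -- the integrand
    (f : EuclideanSpace ℝ (Fin (n + 1)) → ℝ) :
    ∫ u in U, f (x u) * ‖N u‖ = ∫ v in U₂, f (x (ψ v)) * ‖N₂ v‖ := by
  have hNormal : ∀ u, N u = WithLp.toLp 2 ((x' u).stdMatrix.normal) := fun u => by
    ext i; exact hN u i
  have hNormal₂ : ∀ v, N₂ v = WithLp.toLp 2 ((xψ' v).stdMatrix.normal) := fun v => by
    ext i; exact hN₂ v i
  have hψ : ∀ v ∈ U₂, HasFDerivWithinAt ψ (fderivWithin ℝ ψ U₂ v) U₂ v := fun v hv =>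
    ((hψC1 v hv).differentiableWithinAt one_ne_zero).hasFDerivWithinAt
  rw [← hψim, integral_image_eq_integral_abs_det_fderiv_smul volume hU₂closed.measurableSet hψ
    (LeftInvOn.injOn hψinvψ)]
  refine integral_congr_ae ?_
  have hae : ∀ᵐ v ∂volume.restrict U₂, v ∈ interior U₂ := by
    rw [← Measure.restrict_congr_set (interior_ae_eq_of_null_frontier hU₂jordan)]
    exact ae_restrict_mem measurableSet_interior
  filter_upwards [hae] with v hv
  have hvU₂ : v ∈ U₂ := interior_subset hv
  have hchain : xψ' v = (x' (ψ v)).comp (fderivWithin ℝ ψ U₂ v) :=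
    (uniqueDiffWithinAt_of_mem_nhds (mem_interior_iff_mem_nhds.mp hv)).eq (hxψ v hvU₂)
      ((hx _ (hψim ▸ mem_image_of_mem ψ hvU₂)).comp v (hψ v hvU₂) (hψim ▸ mapsTo_image ψ U₂))
  have hnorm : ‖N₂ v‖ = |(fderivWithin ℝ ψ U₂ v).det| * ‖N (ψ v)‖ := by
    rw [hNormal₂, hNormal, hchain, ContinuousLinearMap.normal_stdMatrix_comp, WithLp.toLp_smul,
      norm_smul, Real.norm_eq_abs]
  rw [hnorm, smul_eq_mul]
  ring

/-- Well-definedness of the surface integral (Section 2 of the paper):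
if `x : U → ℝ^m` (with `m = n + 1 ≥ 2`) is a `C¹`-parametrized surface on a Jordan
measurable bounded closed set `U ⊆ ℝ^{m-1}` (derivative data `x'`, injective on the
interior, Jacobian of rank `m - 1`), with normal vector `N`, and `ψ : U₂ → U` is a
`C¹`-diffeomorphism (with inverse `ψinv`), then the reparametrized surface
`x ∘ ψ` (derivative data `xψ'`, normal vector `N₂`) gives the same surface integral
`∫_U f(x(u)) |N(u)| du = ∫_{U₂} f(x(ψ(v))) |N₂(v)| dv` for every continuous `f` on `x(U)`.
The index `i : Fin (n+1)` corresponds to the paper's `i + 1`, so the paper's sign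
`(-1)^(i+1)` is `(-1)^i` here. -/
theorem surface_integral_well_defined
    (n : ℕ) (hn : 1 ≤ n)
    -- the parametrized surface x : U → ℝ^{n+1}
    (U : Set (EuclideanSpace ℝ (Fin n)))
    (hUclosed : IsClosed U) (hUbdd : Bornology.IsBounded U)
    (hUjordan : volume (frontier U) = 0)
    (x : EuclideanSpace ℝ (Fin n) → EuclideanSpace ℝ (Fin (n + 1)))
    (x' : EuclideanSpace ℝ (Fin n) →
      (EuclideanSpace ℝ (Fin n) →L[ℝ] EuclideanSpace ℝ (Fin (n + 1))))
    (hx : ∀ u ∈ U, HasFDerivWithinAt x (x' u) U u)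
    (hx'cont : ContinuousOn x' U)
    (hxinj : InjOn x (interior U))
    (hxrank : ∀ u ∈ U, (Matrix.of fun (i : Fin (n + 1)) (j : Fin n) =>
      x' u (EuclideanSpace.single j 1) i).rank = n)
    (N : EuclideanSpace ℝ (Fin n) → EuclideanSpace ℝ (Fin (n + 1)))
    (hN : ∀ u, ∀ i, N u i = (-1 : ℝ) ^ (i : ℕ) * (Matrix.of fun (j k : Fin n) =>
      x' u (EuclideanSpace.single k 1) (i.succAbove j)).det)
    -- the reparametrization ψ : U₂ → U, a C¹-diffeomorphism
    (U₂ : Set (EuclideanSpace ℝ (Fin n)))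
    (hU₂closed : IsClosed U₂) (hU₂bdd : Bornology.IsBounded U₂)
    (hU₂jordan : volume (frontier U₂) = 0)
    (ψ ψinv : EuclideanSpace ℝ (Fin n) → EuclideanSpace ℝ (Fin n))
    (hψC1 : ContDiffOn ℝ 1 ψ U₂) (hψinvC1 : ContDiffOn ℝ 1 ψinv U)
    (hψim : ψ '' U₂ = U)
    (hψinvψ : ∀ v ∈ U₂, ψinv (ψ v) = v)
    (hψψinv : ∀ u ∈ U, ψ (ψinv u) = u)
    -- the reparametrized surface x ∘ ψ and its normal vector
    (xψ' : EuclideanSpace ℝ (Fin n) →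
      (EuclideanSpace ℝ (Fin n) →L[ℝ] EuclideanSpace ℝ (Fin (n + 1))))
    (hxψ : ∀ v ∈ U₂, HasFDerivWithinAt (x ∘ ψ) (xψ' v) U₂ v)
    (N₂ : EuclideanSpace ℝ (Fin n) → EuclideanSpace ℝ (Fin (n + 1)))
    (hN₂ : ∀ v, ∀ i, N₂ v i = (-1 : ℝ) ^ (i : ℕ) * (Matrix.of fun (j k : Fin n) =>
      xψ' v (EuclideanSpace.single k 1) (i.succAbove j)).det)
    -- the integrand
    (f : EuclideanSpace ℝ (Fin (n + 1)) → ℝ)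
    (hf : ContinuousOn f (x '' U)) :
    ∫ u in U, f (x u) * ‖N u‖ = ∫ v in U₂, f (x (ψ v)) * ‖N₂ v‖ :=
  surface_integral_well_defined_general n U x x' hx N hN U₂ hU₂closed hU₂jordan ψ ψinv hψC1 hψim
    hψinvψ xψ' hxψ N₂ hN₂ f
end

section
/- Let m ≥ 2, let U ⊂ ℝ^{m−1} be a Jordan measurable bounded closed set with nonempty interior, and let φ₋, φ₊ : U → ℝ be C¹ functions with φ₋(x') < φ₊(x') for x' in the interior of U. Let D = { (x', t) ∈ ℝ^{m−1} × ℝ : x' ∈ interior(U), φ₋(x') < t < φ₊(x') }. If g is a real-valued function that is C¹ on an open neighborhood of closure(D), then ∫_D (∂g/∂x^m)(x) dx = ∫_U g(x', φ₊(x')) dx' − ∫_U g(x', φ₋(x')) dx'. -/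
/-!
Slicing `D` vertically, Fubini turns `∫_D ∂g/∂x^m` into
`∫_{int U} ∫_{φ₋(x')}^{φ₊(x')} ∂g/∂t (x', t) dt dx'`. Each closed vertical segment lies in
`closure D ⊆ W`, so the fundamental theorem of calculus evaluates the inner integral as
`g(x', φ₊(x')) - g(x', φ₋(x'))`. All integrands are continuous on the compact set
`closure D`, hence integrable, and `int U` may be replaced by `U` because `frontier U` is null.
-/

open MeasureTheory Set

section regionBetween

variable {X : Type*} {f g : X → ℝ} {s : Set X}

theorem isOpen_regionBetween [TopologicalSpace X] (hs : IsOpen s) (hf : ContinuousOn f s)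
    (hg : ContinuousOn g s) : IsOpen (regionBetween f g s) := by
  have hF : ContinuousOn (fun p : X × ℝ => (p.2 - f p.1, g p.1 - p.2)) (s ×ˢ univ) :=
    ((continuous_snd.continuousOn).sub (hf.comp continuousOn_fst fun _ hp => hp.1)).prodMk
      ((hg.comp continuousOn_fst fun _ hp => hp.1).sub continuous_snd.continuousOn)
  have hpos : IsOpen (Ioi (0 : ℝ) ×ˢ Ioi (0 : ℝ)) := isOpen_Ioi.prod isOpen_Ioi
  convert hF.isOpen_inter_preimage (hs.prod isOpen_univ) hpos using 1
  ext p
  simp [regionBetween]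

theorem mk_mem_closure_regionBetween [TopologicalSpace X] {x : X} (hx : x ∈ s) (hfg : f x < g x)
    {t : ℝ} (ht : t ∈ Icc (f x) (g x)) : (x, t) ∈ closure (regionBetween f g s) := by
  have hmaps : MapsTo (x, ·) (Ioo (f x) (g x)) (regionBetween f g s) := fun _ ht => ⟨hx, ht⟩
  exact hmaps.closure (Continuous.prodMk_right x) (by rwa [closure_Ioo hfg.ne])

theorem isBounded_regionBetween [PseudoMetricSpace X] (hs : Bornology.IsBounded s)
    (hf : BddBelow (f '' s)) (hg : BddAbove (g '' s)) :
    Bornology.IsBounded (regionBetween f g s) := by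
  obtain ⟨a, ha⟩ := hf
  obtain ⟨b, hb⟩ := hg
  refine (hs.prod (Metric.isBounded_Icc a b)).subset fun p ⟨hp, hlo, hhi⟩ => ⟨hp, ?_, ?_⟩
  · exact (ha (mem_image_of_mem f hp)).trans hlo.le
  · exact hhi.le.trans (hb (mem_image_of_mem g hp))

theorem setIntegral_regionBetween [MeasurableSpace X] {μ : Measure X} [SFinite μ]
    {E : Type*} [NormedAddCommGroup E] [NormedSpace ℝ E] (hs : MeasurableSet s)
    (hR : MeasurableSet (regionBetween f g s)) {h : X × ℝ → E}
    (hh : IntegrableOn h (regionBetween f g s) (μ.prod volume)) :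
    ∫ p in regionBetween f g s, h p ∂μ.prod volume =
      ∫ x in s, (∫ t in Ioo (f x) (g x), h (x, t)) ∂μ := by
  have hslice : ∀ x, ∫ t, (regionBetween f g s).indicator h (x, t) =
      s.indicator (fun x => ∫ t in Ioo (f x) (g x), h (x, t)) x := by
    intro x
    by_cases hx : x ∈ s
    · rw [indicator_of_mem hx, ← integral_indicator measurableSet_Ioo]
      congr 1 with t
      simp only [indicator, regionBetween, mem_ofPred_eq, hx, true_and]
    · simp [indicator, regionBetween, hx]
  rw [← integral_indicator hR, integral_prod _ ((integrable_indicator_iff hR).2 hh),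
    ← integral_indicator hs]
  simp only [hslice]

end regionBetween

theorem setIntegral_Ioo_fderiv_apply_zero_one {E F : Type*} [NormedAddCommGroup E]
    [NormedSpace ℝ E] [NormedAddCommGroup F] [NormedSpace ℝ F] [CompleteSpace F]
    {W : Set (E × ℝ)} (hW : IsOpen W) {g : E × ℝ → F} (hg : ContDiffOn ℝ 1 g W) {x : E}
    {a b : ℝ} (hab : a ≤ b) (hseg : ∀ t ∈ Icc a b, (x, t) ∈ W) :
    ∫ t in Ioo a b, fderiv ℝ g (x, t) (0, 1) = g (x, b) - g (x, a) := by
  have hderiv : ∀ t ∈ uIcc a b,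
      HasDerivAt (fun s => g (x, s)) (fderiv ℝ g (x, t) (0, 1)) t := by
    intro t ht
    rw [uIcc_of_le hab] at ht
    have hdg : DifferentiableAt ℝ g (x, t) :=
      (hg.contDiffAt (hW.mem_nhds (hseg t ht))).differentiableAt one_ne_zero
    exact hdg.hasFDerivAt.comp_hasDerivAt t ((hasDerivAt_const t x).prodMk (hasDerivAt_id t))
  have hcont : ContinuousOn (fun t => fderiv ℝ g (x, t) (0, 1)) (Icc a b) :=
    ((hg.continuousOn_fderiv_of_isOpen hW le_rfl).clm_apply continuousOn_const).comp
      (continuous_const.prodMk continuous_id).continuousOn hseg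
  rw [← integral_Ioc_eq_integral_Ioo, ← intervalIntegral.integral_of_le hab]
  exact intervalIntegral.integral_eq_sub_of_hasDerivAt hderiv
    (hcont.intervalIntegrable_of_Icc hab)

theorem integrableOn_comp_of_mapsTo_isCompact {X Y E : Type*} [TopologicalSpace X]
    [MeasurableSpace X] [OpensMeasurableSpace X] [TopologicalSpace Y] [NormedAddCommGroup E]
    [SecondCountableTopologyEither X E] {μ : Measure X} {s : Set X} {K : Set Y}
    {g : Y → E} {γ : X → Y} (hK : IsCompact K) (hg : ContinuousOn g K)
    (hγ : ContinuousOn γ s) (hmaps : MapsTo γ s K) (hs : MeasurableSet s) (hμs : μ s ≠ ⊤) :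
    IntegrableOn (g ∘ γ) s μ := by
  obtain ⟨C, hC⟩ := hK.exists_bound_of_continuousOn hg
  refine .of_bound hμs.lt_top ((hg.comp hγ hmaps).aestronglyMeasurable hs) C ?_
  filter_upwards [ae_restrict_mem hs] with x hx using hC _ (hmaps hx)

theorem m_type_fubini_general
    (n : ℕ)
    (U : Set (EuclideanSpace ℝ (Fin n)))
    (hUclosed : IsClosed U) (hUbdd : Bornology.IsBounded U)
    (hUjordan : volume (frontier U) = 0)
    (φm φp : EuclideanSpace ℝ (Fin n) → ℝ)
    (hφm : ContDiffOn ℝ 1 φm U) (hφp : ContDiffOn ℝ 1 φp U)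
    (hlt : ∀ x' ∈ interior U, φm x' < φp x')
    (D : Set (EuclideanSpace ℝ (Fin n) × ℝ))
    (hD : D = {p | p.1 ∈ interior U ∧ φm p.1 < p.2 ∧ p.2 < φp p.1})
    (W : Set (EuclideanSpace ℝ (Fin n) × ℝ)) (hWopen : IsOpen W)
    (hDW : closure D ⊆ W)
    (g : EuclideanSpace ℝ (Fin n) × ℝ → ℝ)
    (hg : ContDiffOn ℝ 1 g W) :
    ∫ p in D, fderiv ℝ g p ((0 : EuclideanSpace ℝ (Fin n)), (1 : ℝ)) =
      (∫ x' in U, g (x', φp x')) - ∫ x' in U, g (x', φm x') := by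
  replace hD : D = regionBetween φm φp (interior U) := hD
  subst hD
  have hUcomp : IsCompact U := Metric.isCompact_of_isClosed_isBounded hUclosed hUbdd
  have hUfin : volume (interior U) ≠ ⊤ := (hUbdd.subset interior_subset).measure_lt_top.ne
  have hDopen := isOpen_regionBetween isOpen_interior (hφm.continuousOn.mono interior_subset)
    (hφp.continuousOn.mono interior_subset)
  have hDcomp : IsCompact (closure (regionBetween φm φp (interior U))) :=
    (isBounded_regionBetween (hUbdd.subset interior_subset)
      ((hUcomp.bddBelow_image hφm.continuousOn).mono (image_mono interior_subset))
      ((hUcomp.bddAbove_image hφp.continuousOn).mono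
        (image_mono interior_subset))).isCompact_closure
  have hseg : ∀ x ∈ interior U, ∀ t ∈ Icc (φm x) (φp x),
      (x, t) ∈ closure (regionBetween φm φp (interior U)) :=
    fun x hx _ ht => mk_mem_closure_regionBetween hx (hlt x hx) ht
  have hgraph : ∀ φ, ContinuousOn φ U → (∀ x ∈ interior U, φ x ∈ Icc (φm x) (φp x)) →
      IntegrableOn (fun x => g (x, φ x)) (interior U) := fun φ hφ hφmem =>
    integrableOn_comp_of_mapsTo_isCompact hDcomp (hg.continuousOn.mono hDW)
      (continuousOn_id.prodMk (hφ.mono interior_subset))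
      (fun x hx => hseg x hx _ (hφmem x hx)) isOpen_interior.measurableSet hUfin
  have hderiv_int : IntegrableOn (fun p => fderiv ℝ g p (0, 1))
      (regionBetween φm φp (interior U)) :=
    ((((hg.continuousOn_fderiv_of_isOpen hWopen le_rfl).clm_apply continuousOn_const).mono
      hDW).integrableOn_compact hDcomp).mono_set subset_closure
  have hUae := interior_ae_eq_of_null_frontier hUjordan
  rw [← setIntegral_congr_set hUae, ← setIntegral_congr_set hUae,
    ← integral_sub (hgraph φp hφp.continuousOn fun x hx => ⟨(hlt x hx).le, le_rfl⟩)
      (hgraph φm hφm.continuousOn fun x hx => ⟨le_rfl, (hlt x hx).le⟩),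
    Measure.volume_eq_prod, setIntegral_regionBetween isOpen_interior.measurableSet
      hDopen.measurableSet hderiv_int]
  exact setIntegral_congr_fun isOpen_interior.measurableSet fun x hx =>
    setIntegral_Ioo_fderiv_apply_zero_one hWopen hg (hlt x hx).le fun t ht =>
      hDW (hseg x hx t ht)

/-- Fubini computation for an `m`-type domain (key step in the proof of the divergence
theorem, Theorem 2 of the paper).  Here `m = n + 1 ≥ 2`, points of `ℝ^m` are written
as pairs `(x', t) ∈ ℝ^{m-1} × ℝ`, `U ⊆ ℝ^{m-1}` is a Jordan measurable bounded closed
set with nonempty interior, `φ₋ < φ₊` are `C¹` on `U`, `D` is the open region between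
their graphs over the interior of `U`, and `g` is `C¹` on an open neighborhood `W` of
`closure D`.  Then `∫_D ∂g/∂x^m = ∫_U g(x', φ₊(x')) dx' - ∫_U g(x', φ₋(x')) dx'`. -/
theorem m_type_fubini
    (n : ℕ) (hn : 1 ≤ n)
    (U : Set (EuclideanSpace ℝ (Fin n)))
    (hUclosed : IsClosed U) (hUbdd : Bornology.IsBounded U)
    (hUjordan : volume (frontier U) = 0)
    (hUint : (interior U).Nonempty)
    (φm φp : EuclideanSpace ℝ (Fin n) → ℝ)
    (hφm : ContDiffOn ℝ 1 φm U) (hφp : ContDiffOn ℝ 1 φp U)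
    (hlt : ∀ x' ∈ interior U, φm x' < φp x')
    (D : Set (EuclideanSpace ℝ (Fin n) × ℝ))
    (hD : D = {p | p.1 ∈ interior U ∧ φm p.1 < p.2 ∧ p.2 < φp p.1})
    (W : Set (EuclideanSpace ℝ (Fin n) × ℝ)) (hWopen : IsOpen W)
    (hDW : closure D ⊆ W)
    (g : EuclideanSpace ℝ (Fin n) × ℝ → ℝ)
    (hg : ContDiffOn ℝ 1 g W) :
    ∫ p in D, fderiv ℝ g p ((0 : EuclideanSpace ℝ (Fin n)), (1 : ℝ)) =
      (∫ x' in U, g (x', φp x')) - ∫ x' in U, g (x', φm x') :=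
  m_type_fubini_general n U hUclosed hUbdd hUjordan φm φp hφm hφp hlt D hD W hWopen hDW g hg
end
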